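/- Let E be a real Banach space and let u : (0,∞) → E be strongly measurable with ∫₀^∞ (1 + |log s|)²·‖u(s)‖ ds/s < ∞, ∫₀^∞ u(s) ds/s = 0, and ∫₀^∞ Pw(s)·u(s) ds/s = 0 (Bochner integrals). Let w : (0,∞) → ℝ be integrable on (0,t) for every t > 0 with ‖w‖_W := sup_{t>0} |Pw(t) − w(t)| < ∞. Then Pw(t)·∫₀ᵗ Pw(s)·u(s) ds/s → 0 in E both as t → 0⁺ and as t → ∞. -/

import Mathlib

/-!
By the fundamental theorem of calculus for absolutely continuous functions,
`Pw(b) - Pw(a) = ∫ₐᵇ (w - Pw)(s) ds/s`, so `|Pw(b) - Pw(a)| ≤ ‖w‖_W |log b - log a|` and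
`|Pw(t)| ≤ K (1 + |log t|)`. When `s < t ≤ 1` or `1 ≤ t < s` we have `|log t| ≤ |log s|`, hence
`|Pw(t)| ‖Pw(s) u(s)/s‖ ≤ K² (1 + |log s|)² ‖u(s)‖/s`, an integrable majorant. Near `0` the
boundary term is bounded by the integral of the majorant over `(0, t)`; near `∞` the cancellation
`∫₀^∞ Pw(s) u(s) ds/s = 0` turns `∫₀ᵗ` into `-∫ₜ^∞`, bounded by the majorant over `(t, ∞)`.
-/
open MeasureTheory Set Real Filter Topology

/-- The averaging operator `Pw(t) = (1/t) ∫₀ᵗ w(s) ds`. -/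
noncomputable def Pav (w : ℝ → ℝ) (t : ℝ) : ℝ := (1 / t) * ∫ s in Ioo (0 : ℝ) t, w s

section Averaging

variable {w : ℝ → ℝ}

theorem Pav_eq_inv_mul_intervalIntegral {t : ℝ} (ht : 0 < t) :
    Pav w t = t⁻¹ * ∫ s in 0..t, w s := by
  rw [Pav, one_div, intervalIntegral.integral_of_le ht.le, integral_Ioc_eq_integral_Ioo]

theorem Pav_sub_Pav_eq_integral {a b : ℝ} (hw : IntegrableOn w (Ioo 0 b)) (ha : 0 < a)
    (hab : a ≤ b) :
    Pav w b - Pav w a = ∫ s in a..b, (w s - Pav w s) / s := by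
  have hwi : IntervalIntegrable w volume 0 b :=
    (intervalIntegrable_iff_integrableOn_Ioo_of_le (ha.trans_le hab).le).2 hw
  have hG : AbsolutelyContinuousOnInterval (fun t => ∫ s in 0..t, w s) a b :=
    (hwi.absolutelyContinuousOnInterval_intervalIntegral left_mem_uIcc).mono
      (uIcc_subset_uIcc_right (by rw [uIcc_of_le (ha.trans_le hab).le]; exact ⟨ha.le, hab⟩))
  have hinv : AbsolutelyContinuousOnInterval (fun t : ℝ => t⁻¹) a b := by
    refine ContDiffOn.absolutelyContinuousOnInterval (contDiffOn_inv ℝ |>.mono ?_)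
    intro x hx
    rw [uIcc_of_le hab] at hx
    exact (ha.trans_le hx.1).ne'
  rw [Pav_eq_inv_mul_intervalIntegral ha, Pav_eq_inv_mul_intervalIntegral (ha.trans_le hab),
    ← (hinv.fun_mul hG).integral_deriv_eq_sub]
  refine intervalIntegral.integral_congr_ae ?_
  filter_upwards [hwi.ae_hasDerivAt_integral] with x hGx hx
  rw [uIoc_of_le hab] at hx
  have hx0 : 0 < x := ha.trans hx.1
  have hderiv := (hasDerivAt_inv hx0.ne').fun_mul
    (hGx ⟨by simp [hx0.le], by simp [hx.2]⟩ 0 left_mem_uIcc)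
  rw [hderiv.deriv, Pav_eq_inv_mul_intervalIntegral hx0]
  field_simp
  ring

theorem abs_Pav_sub_Pav_le {C : ℝ} (hwInt : ∀ t > (0 : ℝ), IntegrableOn w (Ioo 0 t))
    (hW : ∀ t > (0 : ℝ), |Pav w t - w t| ≤ C) {a b : ℝ} (ha : 0 < a) (hb : 0 < b) :
    |Pav w b - Pav w a| ≤ C * |log b - log a| := by
  wlog hab : a ≤ b generalizing a b
  · rw [abs_sub_comm, abs_sub_comm (log b)]
    exact this hb ha (le_of_not_ge hab)
  have hbound : ∀ s ∈ Ioc a b, ‖(w s - Pav w s) / s‖ ≤ C * s⁻¹ := fun s hs => by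
    have hs : 0 < s := ha.trans hs.1
    rw [norm_div, norm_of_nonneg hs.le, Real.norm_eq_abs, abs_sub_comm, div_eq_mul_inv]
    gcongr
    exact hW s hs
  calc |Pav w b - Pav w a|
      ≤ ∫ s in a..b, C * s⁻¹ := by
        rw [Pav_sub_Pav_eq_integral (hwInt b hb) ha hab, ← Real.norm_eq_abs]
        refine intervalIntegral.norm_integral_le_of_norm_le hab
          (Eventually.of_forall hbound) ?_
        refine (continuousOn_const.mul (continuousOn_inv₀.mono fun x hx => ?_)).intervalIntegrable
        rw [uIcc_of_le hab] at hx
        exact (ha.trans_le hx.1).ne'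
    _ = C * |log b - log a| := by
        rw [intervalIntegral.integral_const_mul, integral_inv_of_pos ha hb, log_div hb.ne' ha.ne',
          abs_of_nonneg (sub_nonneg.2 (log_le_log ha hab))]

theorem abs_Pav_le {C : ℝ} (hwInt : ∀ t > (0 : ℝ), IntegrableOn w (Ioo 0 t))
    (hW : ∀ t > (0 : ℝ), |Pav w t - w t| ≤ C) {t : ℝ} (ht : 0 < t) :
    |Pav w t| ≤ (|Pav w 1| + C) * (1 + |log t|) := by
  have hC : 0 ≤ C := (abs_nonneg _).trans (hW 1 one_pos)
  have h := abs_Pav_sub_Pav_le hwInt hW one_pos ht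
  rw [log_one, sub_zero] at h
  have := abs_sub_abs_le_abs_sub (Pav w t) (Pav w 1)
  nlinarith [abs_nonneg (Pav w 1), abs_nonneg (log t)]

theorem continuousOn_Pav {C : ℝ} (hwInt : ∀ t > (0 : ℝ), IntegrableOn w (Ioo 0 t))
    (hW : ∀ t > (0 : ℝ), |Pav w t - w t| ≤ C) : ContinuousOn (Pav w) (Ioi 0) := by
  intro x hx
  have hlog : Tendsto (fun t => C * |log t - log x|) (𝓝[Ioi 0] x) (𝓝 0) := by
    have : ContinuousAt (fun t => C * |log t - log x|) x :=
      (((continuousAt_log (ne_of_gt hx)).sub continuousAt_const).abs).const_mul C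
    simpa using this.tendsto.mono_left nhdsWithin_le_nhds
  refine tendsto_iff_norm_sub_tendsto_zero.2
    (squeeze_zero' (Eventually.of_forall fun _ => norm_nonneg _) ?_ hlog)
  filter_upwards [self_mem_nhdsWithin] with t ht
  exact abs_Pav_sub_Pav_le hwInt hW hx ht

end Averaging

section LogarithmicGrowth

variable {E : Type*} [NormedAddCommGroup E] [NormedSpace ℝ E]

theorem norm_smul_setIntegral_le {α : Type*} [MeasurableSpace α] {μ : Measure α} {S : Set α}
    {c : ℝ} {g : α → E} {h : α → ℝ} (hS : MeasurableSet S) (hh : IntegrableOn h S μ)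
    (hgh : ∀ x ∈ S, |c| * ‖g x‖ ≤ h x) :
    ‖c • ∫ x in S, g x ∂μ‖ ≤ ∫ x in S, h x ∂μ := by
  rw [← integral_smul]
  refine norm_integral_le_of_norm_le hh ((ae_restrict_iff' hS).2 (Eventually.of_forall ?_))
  intro x hx
  rw [norm_smul, Real.norm_eq_abs]
  exact hgh x hx

theorem tendsto_setIntegral_Ioo_nhdsGT_zero {f : ℝ → E} (hf : IntegrableOn f (Ioi 0)) :
    Tendsto (fun t => ∫ s in Ioo 0 t, f s) (𝓝[>] 0) (𝓝 0) := by
  have hvol : Tendsto (fun t : ℝ => volume.restrict (Ioi 0) (Ioo 0 t)) (𝓝[>] 0) (𝓝 0) := by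
    have : Tendsto (fun t : ℝ => ENNReal.ofReal t) (𝓝[>] 0) (𝓝 0) := by
      simpa using (ENNReal.continuous_ofReal.tendsto 0).mono_left nhdsWithin_le_nhds
    refine tendsto_of_tendsto_of_tendsto_of_le_of_le tendsto_const_nhds this (fun _ => bot_le)
      fun t => ?_
    calc volume.restrict (Ioi 0) (Ioo 0 t) ≤ volume (Ioo 0 t) := Measure.restrict_apply_le _ _
      _ = ENNReal.ofReal t := by simp [Real.volume_Ioo]
  refine (hf.tendsto_setIntegral_nhds_zero hvol).congr fun t => ?_
  rw [Measure.restrict_restrict measurableSet_Ioo, inter_eq_left.2 fun x hx => hx.1]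

theorem setIntegral_Ioo_eq_neg_setIntegral_Ioi {f : ℝ → E} (hf : IntegrableOn f (Ioi 0))
    (hf0 : ∫ s in Ioi 0, f s = 0) {t : ℝ} (ht : 0 < t) :
    ∫ s in Ioo 0 t, f s = -∫ s in Ioi t, f s := by
  rw [eq_neg_iff_add_eq_zero, ← hf0, ← integral_Ioc_eq_integral_Ioo,
    ← intervalIntegral.integral_of_le ht.le,
    intervalIntegral.integral_interval_add_Ioi hf (hf.mono_set (Ioi_subset_Ioi ht.le))]

variable {p : ℝ → ℝ} {u : ℝ → E} {K : ℝ}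

theorem abs_mul_norm_div_smul_le (hp : ∀ t > 0, |p t| ≤ K * (1 + |log t|)) {s t : ℝ}
    (hs : 0 < s) (ht : 0 < t) (hts : |log t| ≤ |log s|) :
    |p t| * ‖(p s / s) • u s‖ ≤ K ^ 2 * ((1 + |log s|) ^ 2 * ‖u s‖ / s) := by
  have hK : 0 ≤ K := by simpa using (abs_nonneg (p 1)).trans (hp 1 one_pos)
  have hpt : |p t| ≤ K * (1 + |log s|) := (hp t ht).trans (by gcongr)
  rw [norm_smul, norm_div, Real.norm_eq_abs, norm_of_nonneg hs.le]
  calc |p t| * (|p s| / s * ‖u s‖)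
      ≤ K * (1 + |log s|) * (K * (1 + |log s|) / s * ‖u s‖) := by
        gcongr
        exact hp s hs
    _ = K ^ 2 * ((1 + |log s|) ^ 2 * ‖u s‖ / s) := by ring

theorem integrableOn_div_smul (hp : ∀ t > 0, |p t| ≤ K * (1 + |log t|))
    (hpm : AEStronglyMeasurable p (volume.restrict (Ioi 0)))
    (hum : AEStronglyMeasurable u (volume.restrict (Ioi 0)))
    (hu : IntegrableOn (fun s => (1 + |log s|) ^ 2 * ‖u s‖ / s) (Ioi 0)) :
    IntegrableOn (fun s => (p s / s) • u s) (Ioi 0) := by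
  refine Integrable.mono' (hu.const_mul K) ((hpm.div₀ aestronglyMeasurable_id).smul hum)
    ((ae_restrict_iff' measurableSet_Ioi).2 (Eventually.of_forall fun s (hs : 0 < s) => ?_))
  have hK : 0 ≤ K := by simpa using (abs_nonneg (p 1)).trans (hp 1 one_pos)
  rw [norm_smul, norm_div, Real.norm_eq_abs, norm_of_nonneg hs.le]
  calc |p s| / s * ‖u s‖ ≤ K * (1 + |log s|) / s * ‖u s‖ := by gcongr; exact hp s hs
    _ ≤ K * ((1 + |log s|) ^ 2 * ‖u s‖ / s) := by
        rw [div_mul_eq_mul_div, mul_assoc, mul_div_assoc]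
        gcongr
        nlinarith [abs_nonneg (log s)]

theorem tendsto_smul_setIntegral_Ioo_nhdsGT_zero (hp : ∀ t > 0, |p t| ≤ K * (1 + |log t|))
    (hu : IntegrableOn (fun s => (1 + |log s|) ^ 2 * ‖u s‖ / s) (Ioi 0)) :
    Tendsto (fun t => p t • ∫ s in Ioo 0 t, (p s / s) • u s) (𝓝[>] 0) (𝓝 0) := by
  have hdom : IntegrableOn (fun s => K ^ 2 * ((1 + |log s|) ^ 2 * ‖u s‖ / s)) (Ioi 0) :=
    hu.const_mul _
  refine squeeze_zero_norm' ?_ (tendsto_setIntegral_Ioo_nhdsGT_zero hdom)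
  filter_upwards [Ioo_mem_nhdsGT one_pos] with t ⟨ht, ht1⟩
  refine norm_smul_setIntegral_le measurableSet_Ioo (hdom.mono_set fun s hs => hs.1)
    fun s ⟨hs, hst⟩ => abs_mul_norm_div_smul_le hp hs ht ?_
  rw [abs_of_neg (log_neg ht ht1), abs_of_neg (log_neg hs (hst.trans ht1))]
  exact neg_le_neg (log_le_log hs hst.le)

theorem tendsto_smul_setIntegral_Ioo_atTop (hp : ∀ t > 0, |p t| ≤ K * (1 + |log t|))
    (hpm : AEStronglyMeasurable p (volume.restrict (Ioi 0)))
    (hum : AEStronglyMeasurable u (volume.restrict (Ioi 0)))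
    (hu : IntegrableOn (fun s => (1 + |log s|) ^ 2 * ‖u s‖ / s) (Ioi 0))
    (hcancel : ∫ s in Ioi 0, (p s / s) • u s = 0) :
    Tendsto (fun t => p t • ∫ s in Ioo 0 t, (p s / s) • u s) atTop (𝓝 0) := by
  let M : ℝ → ℝ := fun s => K ^ 2 * ((1 + |log s|) ^ 2 * ‖u s‖ / s)
  have hdom : IntegrableOn M (Ioi 0) := hu.const_mul _
  refine squeeze_zero_norm' ?_ (tendsto_integral_Ioi_zero (f := M) (μ := volume) tendsto_id)
  filter_upwards [eventually_ge_atTop 1] with t ht1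
  have ht : 0 < t := one_pos.trans_le ht1
  rw [setIntegral_Ioo_eq_neg_setIntegral_Ioi (integrableOn_div_smul hp hpm hum hu) hcancel ht,
    smul_neg, norm_neg]
  refine norm_smul_setIntegral_le measurableSet_Ioi (hdom.mono_set (Ioi_subset_Ioi ht.le))
    fun s (hts : t < s) => abs_mul_norm_div_smul_le hp (ht.trans hts) ht ?_
  rw [abs_of_nonneg (log_nonneg ht1), abs_of_nonneg (log_nonneg (ht1.trans hts.le))]
  exact log_le_log ht hts.le

end LogarithmicGrowth

theorem second_order_boundary_term_vanishes_general {E : Type*} [NormedAddCommGroup E]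
    [NormedSpace ℝ E] (u : ℝ → E) (w : ℝ → ℝ) (C : ℝ)
    (hu_meas : AEStronglyMeasurable u (volume.restrict (Ioi 0)))
    (hu_int : IntegrableOn (fun s => (1 + |Real.log s|) ^ 2 * ‖u s‖ / s) (Ioi 0))
    (hu_cancel' : ∫ s in Ioi (0 : ℝ), (Pav w s / s) • u s = 0)
    (hwInt : ∀ t > (0 : ℝ), IntegrableOn w (Ioo 0 t))
    (hW : ∀ t > (0 : ℝ), |Pav w t - w t| ≤ C) :
    Tendsto (fun t : ℝ => Pav w t • ∫ s in Ioo (0 : ℝ) t, (Pav w s / s) • u s)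
      (nhdsWithin 0 (Ioi 0)) (nhds 0) ∧
    Tendsto (fun t : ℝ => Pav w t • ∫ s in Ioo (0 : ℝ) t, (Pav w s / s) • u s)
      atTop (nhds 0) := by
  have hgrowth : ∀ t > 0, |Pav w t| ≤ (|Pav w 1| + C) * (1 + |log t|) :=
    fun _ ht => abs_Pav_le hwInt hW ht
  have hmeas : AEStronglyMeasurable (Pav w) (volume.restrict (Ioi 0)) :=
    (continuousOn_Pav hwInt hW).aestronglyMeasurable measurableSet_Ioi
  exact ⟨tendsto_smul_setIntegral_Ioo_nhdsGT_zero hgrowth hu_int,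
    tendsto_smul_setIntegral_Ioo_atTop hgrowth hmeas hu_meas hu_int hu_cancel'⟩

/-- Vanishing of the second-order boundary term:
`Pw(t) ∫₀ᵗ Pw(s) u(s) ds/s → 0` as `t → 0⁺` and as `t → ∞`. -/
theorem second_order_boundary_term_vanishes {E : Type*} [NormedAddCommGroup E]
    [NormedSpace ℝ E] [CompleteSpace E] (u : ℝ → E) (w : ℝ → ℝ) (C : ℝ)
    (hu_meas : AEStronglyMeasurable u (volume.restrict (Ioi 0)))
    (hu_int : IntegrableOn (fun s => (1 + |Real.log s|) ^ 2 * ‖u s‖ / s) (Ioi 0))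
    (hu_cancel : ∫ s in Ioi (0 : ℝ), s⁻¹ • u s = 0)
    (hu_cancel' : ∫ s in Ioi (0 : ℝ), (Pav w s / s) • u s = 0)
    (hwInt : ∀ t > (0 : ℝ), IntegrableOn w (Ioo 0 t))
    (hW : ∀ t > (0 : ℝ), |Pav w t - w t| ≤ C) :
    Tendsto (fun t : ℝ => Pav w t • ∫ s in Ioo (0 : ℝ) t, (Pav w s / s) • u s)
      (nhdsWithin 0 (Ioi 0)) (nhds 0) ∧
    Tendsto (fun t : ℝ => Pav w t • ∫ s in Ioo (0 : ℝ) t, (Pav w s / s) • u s)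
      atTop (nhds 0) :=
  second_order_boundary_term_vanishes_general u w C hu_meas hu_int hu_cancel' hwInt hW
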